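/- Let (Aₙ) ⊆ SL(2,ℂ) be a sequence with entries aₙ, bₙ, cₙ, dₙ such that the associated matrices ι(Aₙ) = [[aₙ², aₙbₙ, bₙ²],[2aₙcₙ, aₙdₙ+bₙcₙ, 2bₙdₙ],[cₙ², cₙdₙ, dₙ²]], after suitable nonzero scalar rescaling, converge to the identity matrix. Then, after suitable choice of signs εₙ ∈ {±1}, the matrices εₙAₙ converge to the identity in SL(2,ℂ). -/

import Mathlib

/-!
If `c • ι(A) → 1`, the off-diagonal corners give `c b² → 0` and `c c² → 0`, hence `c bc → 0`;
since `ad - bc = 1` the middle entry `c (ad + bc)` equals `c - 2 c bc`, so the scale `c` tends to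
`1` and `ι(A) → 1` itself. Then `b, c → 0`, `ad = 1 + bc → 1` and `a² → 1`. The sign `ε` picks the
square root `±a` nearer to `1`, and `‖εa - 1‖² ≤ ‖a - 1‖ ‖a + 1‖ = ‖a² - 1‖` gives `εa → 1`, whence
`εd = ad / (εa) → 1`.
-/

open Matrix Filter

noncomputable def iota (A : Matrix (Fin 2) (Fin 2) ℂ) : Matrix (Fin 3) (Fin 3) ℂ :=
  !![A 0 0 ^ 2, A 0 0 * A 0 1, A 0 1 ^ 2;
     2 * A 0 0 * A 1 0, A 0 0 * A 1 1 + A 0 1 * A 1 0, 2 * A 0 1 * A 1 1;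
     A 1 0 ^ 2, A 1 0 * A 1 1, A 1 1 ^ 2]

open Topology

section NormedDivisionRing

variable {α 𝕜 : Type*} [NormedDivisionRing 𝕜] {l : Filter α} {f : α → 𝕜}

lemma tendsto_zero_of_tendsto_sq_zero (h : Tendsto (fun x => f x ^ 2) l (𝓝 0)) :
    Tendsto f l (𝓝 0) := by
  rw [tendsto_zero_iff_norm_tendsto_zero] at h ⊢
  refine ((Real.continuous_sqrt.tendsto' 0 0 Real.sqrt_zero).comp h).congr fun x => ?_
  simp [Real.sqrt_sq (norm_nonneg _)]

lemma exists_sign_norm_mul_sub_one_sq_le (z : 𝕜) :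
    ∃ ε : 𝕜, (ε = 1 ∨ ε = -1) ∧ ‖ε * z - 1‖ ^ 2 ≤ ‖z ^ 2 - 1‖ := by
  have hfac : ‖z ^ 2 - 1‖ = ‖z - 1‖ * ‖z + 1‖ := by
    rw [← norm_mul]; congr 1; noncomm_ring
  rcases le_total ‖z - 1‖ ‖z + 1‖ with h | h
  · refine ⟨1, Or.inl rfl, ?_⟩
    rw [one_mul, hfac, sq]
    exact mul_le_mul_of_nonneg_left h (norm_nonneg _)
  · refine ⟨-1, Or.inr rfl, ?_⟩
    rw [show -1 * z - 1 = -(z + 1) by noncomm_ring, norm_neg, hfac, sq]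
    exact mul_le_mul_of_nonneg_right h (norm_nonneg _)

lemma exists_sign_mul_tendsto_one_of_sq_tendsto_one (h : Tendsto (fun x => f x ^ 2) l (𝓝 1)) :
    ∃ ε : α → 𝕜, (∀ x, ε x = 1 ∨ ε x = -1) ∧ Tendsto (fun x => ε x * f x) l (𝓝 1) := by
  choose ε hε hle using fun x => exists_sign_norm_mul_sub_one_sq_le (f x)
  refine ⟨ε, hε, tendsto_iff_norm_sub_tendsto_zero.2 ?_⟩
  have hsq : Tendsto (fun x => ‖ε x * f x - 1‖ ^ 2) l (𝓝 0) :=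
    squeeze_zero (fun _ => by positivity) hle (tendsto_iff_norm_sub_tendsto_zero.1 h)
  exact tendsto_zero_of_tendsto_sq_zero hsq

lemma tendsto_sign_mul_zero {ε : α → 𝕜} (hε : ∀ x, ε x = 1 ∨ ε x = -1)
    (h : Tendsto f l (𝓝 0)) : Tendsto (fun x => ε x * f x) l (𝓝 0) :=
  squeeze_zero_norm (fun x => by rcases hε x with h | h <;> simp [h])
    (tendsto_zero_iff_norm_tendsto_zero.1 h)

end NormedDivisionRing

theorem Filter.Tendsto.matrix_elem {α R m n : Type*} [TopologicalSpace R] {l : Filter α}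
    {M : α → Matrix m n R} {L : Matrix m n R} (h : Tendsto M l (𝓝 L)) (i : m) (j : n) :
    Tendsto (fun x => M x i j) l (𝓝 (L i j)) :=
  tendsto_pi_nhds.1 (tendsto_pi_nhds.1 h i) j

section SL2

variable {α : Type*} {l : Filter α} {A : α → Matrix (Fin 2) (Fin 2) ℂ}

lemma tendsto_scale_one_of_tendsto_smul_iota (hdet : ∀ x, (A x).det = 1) {c : α → ℂ}
    (h : Tendsto (fun x => c x • iota (A x)) l (𝓝 1)) : Tendsto c l (𝓝 1) := by
  have h02 : Tendsto (fun x => c x * A x 0 1 ^ 2) l (𝓝 0) := by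
    simpa [iota] using h.matrix_elem 0 2
  have h20 : Tendsto (fun x => c x * A x 1 0 ^ 2) l (𝓝 0) := by
    simpa [iota] using h.matrix_elem 2 0
  have h11 : Tendsto (fun x => c x * (A x 0 0 * A x 1 1 + A x 0 1 * A x 1 0)) l (𝓝 1) := by
    simpa [iota] using h.matrix_elem 1 1
  have hbc : Tendsto (fun x => c x * (A x 0 1 * A x 1 0)) l (𝓝 0) := by
    refine tendsto_zero_of_tendsto_sq_zero ?_
    simpa using (h02.mul h20).congr fun x => by ring
  -- `c = c * det A = c * (ad + bc) - 2 * c * bc`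
  have := h11.sub (hbc.const_mul 2)
  rw [mul_zero, sub_zero] at this
  refine this.congr fun x => ?_
  linear_combination c x * ((det_fin_two (A x)).symm.trans (hdet x))

lemma tendsto_iota_of_tendsto_smul_iota (hdet : ∀ x, (A x).det = 1) {c : α → ℂ}
    (h : Tendsto (fun x => c x • iota (A x)) l (𝓝 1)) : Tendsto (fun x => iota (A x)) l (𝓝 1) := by
  have hc := tendsto_scale_one_of_tendsto_smul_iota hdet h
  have := (hc.inv₀ one_ne_zero).smul h
  rw [inv_one, one_smul] at this
  refine this.congr' ?_
  filter_upwards [hc.eventually_ne one_ne_zero] with x hx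
  simp [smul_smul, inv_mul_cancel₀ hx]

lemma exists_sign_smul_tendsto_one_of_tendsto_iota (hdet : ∀ x, (A x).det = 1)
    (h : Tendsto (fun x => iota (A x)) l (𝓝 1)) :
    ∃ ε : α → ℂ, (∀ x, ε x = 1 ∨ ε x = -1) ∧ Tendsto (fun x => ε x • A x) l (𝓝 1) := by
  have ha : Tendsto (fun x => A x 0 0 ^ 2) l (𝓝 1) := by simpa [iota] using h.matrix_elem 0 0
  have hb : Tendsto (fun x => A x 0 1) l (𝓝 0) :=
    tendsto_zero_of_tendsto_sq_zero (by simpa [iota] using h.matrix_elem 0 2)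
  have hc : Tendsto (fun x => A x 1 0) l (𝓝 0) :=
    tendsto_zero_of_tendsto_sq_zero (by simpa [iota] using h.matrix_elem 2 0)
  have had : Tendsto (fun x => A x 0 0 * A x 1 1) l (𝓝 1) := by
    have := (hb.mul hc).const_add 1
    rw [mul_zero, add_zero] at this
    refine this.congr fun x => ?_
    linear_combination -((det_fin_two (A x)).symm.trans (hdet x))
  obtain ⟨ε, hε, hεa⟩ := exists_sign_mul_tendsto_one_of_sq_tendsto_one ha
  have hεd : Tendsto (fun x => ε x * A x 1 1) l (𝓝 1) := by
    have := had.div hεa one_ne_zero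
    rw [div_one] at this
    refine this.congr' ?_
    filter_upwards [hεa.eventually_ne one_ne_zero] with x hx
    have ha0 : A x 0 0 ≠ 0 := right_ne_zero_of_mul hx
    rcases hε x with h | h <;> simp only [Pi.div_apply, h] <;> field_simp
  refine ⟨ε, hε, tendsto_pi_nhds.2 fun i => tendsto_pi_nhds.2 fun j => ?_⟩
  fin_cases i <;> fin_cases j
  · simpa using hεa
  · simpa using tendsto_sign_mul_zero hε hb
  · simpa using tendsto_sign_mul_zero hε hc
  · simpa using hεd

end SL2

theorem iota_proper_general (A : ℕ → Matrix (Fin 2) (Fin 2) ℂ) (hdet : ∀ n, (A n).det = 1)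
    (c : ℕ → ℂ)
    (hconv : Tendsto (fun n => c n • iota (A n)) atTop
      (nhds (1 : Matrix (Fin 3) (Fin 3) ℂ))) :
    ∃ ε : ℕ → ℂ, (∀ n, ε n = 1 ∨ ε n = -1) ∧
      Tendsto (fun n => ε n • A n) atTop (nhds (1 : Matrix (Fin 2) (Fin 2) ℂ)) :=
  exists_sign_smul_tendsto_one_of_tendsto_iota hdet (tendsto_iota_of_tendsto_smul_iota hdet hconv)

theorem iota_proper (A : ℕ → Matrix (Fin 2) (Fin 2) ℂ) (hdet : ∀ n, (A n).det = 1)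
    (c : ℕ → ℂ) (hc : ∀ n, c n ≠ 0)
    (hconv : Tendsto (fun n => c n • iota (A n)) atTop
      (nhds (1 : Matrix (Fin 3) (Fin 3) ℂ))) :
    ∃ ε : ℕ → ℂ, (∀ n, ε n = 1 ∨ ε n = -1) ∧
      Tendsto (fun n => ε n • A n) atTop (nhds (1 : Matrix (Fin 2) (Fin 2) ℂ)) :=
  iota_proper_general A hdet c hconv
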